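/- Let H be the formula ∀x ∀y (F(x) ⇒ F(y) ⇒ F(x ∪ y)). Then the formula H ⇒ ∀ᶜa ∀ᶜb ((¬ᶜ F(a ∪ b)) ⇒ᶜ (¬ᶜ F(a) ∨ᶜ ¬ᶜ F(b))) has a constructive proof, where ¬ᶜA = ¬¬¬¬¬A, A ∨ᶜ B = ¬¬((¬¬A) ∨ (¬¬B)), A ⇒ᶜ B = ¬¬((¬¬A) ⇒ (¬¬B)), and ∀ᶜx A = ¬¬∀x ¬¬A. -/

import Mathlib

/-- Terms: de Bruijn variables and a binary function symbol (union). -/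
inductive Tm : Type where
  | var : Nat → Tm
  | cup : Tm → Tm → Tm
deriving DecidableEq

def Tm.rename (f : Nat → Nat) : Tm → Tm
  | .var n => .var (f n)
  | .cup s t => .cup (s.rename f) (t.rename f)

def Tm.subst (σ : Nat → Tm) : Tm → Tm
  | .var n => σ n
  | .cup s t => .cup (s.subst σ) (t.subst σ)

/-- First-order formulas over Nat-indexed predicate symbols, de Bruijn binders. -/
inductive Fm : Type where
  | atom : Nat → List Tm → Fm
  | top : Fm
  | bot : Fm
  | neg : Fm → Fm
  | and : Fm → Fm → Fm
  | or : Fm → Fm → Fm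
  | imp : Fm → Fm → Fm
  | all : Fm → Fm
  | ex : Fm → Fm
deriving DecidableEq

def liftR (f : Nat → Nat) : Nat → Nat
  | 0 => 0
  | n + 1 => f n + 1

def liftS (σ : Nat → Tm) : Nat → Tm
  | 0 => .var 0
  | n + 1 => (σ n).rename Nat.succ

def Fm.rename (f : Nat → Nat) : Fm → Fm
  | .atom p l => .atom p (l.map (Tm.rename f))
  | .top => .top
  | .bot => .bot
  | .neg A => .neg (A.rename f)
  | .and A B => .and (A.rename f) (B.rename f)
  | .or A B => .or (A.rename f) (B.rename f)
  | .imp A B => .imp (A.rename f) (B.rename f)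
  | .all A => .all (A.rename (liftR f))
  | .ex A => .ex (A.rename (liftR f))

def Fm.subst (σ : Nat → Tm) : Fm → Fm
  | .atom p l => .atom p (l.map (Tm.subst σ))
  | .top => .top
  | .bot => .bot
  | .neg A => .neg (A.subst σ)
  | .and A B => .and (A.subst σ) (B.subst σ)
  | .or A B => .or (A.subst σ) (B.subst σ)
  | .imp A B => .imp (A.subst σ) (B.subst σ)
  | .all A => .all (A.subst (liftS σ))
  | .ex A => .ex (A.subst (liftS σ))

/-- Shift all free variables up by one. -/
def Fm.shift (A : Fm) : Fm := A.rename Nat.succ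

/-- Instantiate the outermost bound variable with term `t` : `(t/x)A`. -/
def Fm.inst (t : Tm) (A : Fm) : Fm :=
  A.subst (fun n => match n with | 0 => t | n + 1 => .var n)

/-- Double negation. -/
def Fm.dn (A : Fm) : Fm := .neg (.neg A)

/-- Cut-free classical multi-conclusion sequent calculus (Figure 1). -/
inductive Cl : List Fm → List Fm → Prop where
  | ax (A : Fm) : Cl [A] [A]
  | perm {Γ Γ' Δ Δ'} : Γ.Perm Γ' → Δ.Perm Δ' → Cl Γ Δ → Cl Γ' Δ'
  | contrL {Γ Δ A} : Cl (A :: A :: Γ) Δ → Cl (A :: Γ) Δ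
  | contrR {Γ Δ A} : Cl Γ (A :: A :: Δ) → Cl Γ (A :: Δ)
  | weakL {Γ Δ A} : Cl Γ Δ → Cl (A :: Γ) Δ
  | weakR {Γ Δ A} : Cl Γ Δ → Cl Γ (A :: Δ)
  | topR {Γ Δ} : Cl Γ (.top :: Δ)
  | botL {Γ Δ} : Cl (.bot :: Γ) Δ
  | negL {Γ Δ A} : Cl Γ (A :: Δ) → Cl (.neg A :: Γ) Δ
  | negR {Γ Δ A} : Cl (A :: Γ) Δ → Cl Γ (.neg A :: Δ)
  | andL {Γ Δ A B} : Cl (A :: B :: Γ) Δ → Cl (.and A B :: Γ) Δ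
  | andR {Γ Δ A B} : Cl Γ (A :: Δ) → Cl Γ (B :: Δ) → Cl Γ (.and A B :: Δ)
  | orL {Γ Δ A B} : Cl (A :: Γ) Δ → Cl (B :: Γ) Δ → Cl (.or A B :: Γ) Δ
  | orR1 {Γ Δ A B} : Cl Γ (A :: Δ) → Cl Γ (.or A B :: Δ)
  | orR2 {Γ Δ A B} : Cl Γ (B :: Δ) → Cl Γ (.or A B :: Δ)
  | impL {Γ Δ A B} : Cl Γ (A :: Δ) → Cl (B :: Γ) Δ → Cl (.imp A B :: Γ) Δ
  | impR {Γ Δ A B} : Cl (A :: Γ) (B :: Δ) → Cl Γ (.imp A B :: Δ)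
  | allL {Γ Δ A} (t : Tm) : Cl (A.inst t :: Γ) Δ → Cl (.all A :: Γ) Δ
  | allR {Γ Δ A} : Cl (Γ.map Fm.shift) (A :: Δ.map Fm.shift) → Cl Γ (.all A :: Δ)
  | exL {Γ Δ A} : Cl (A :: Γ.map Fm.shift) (Δ.map Fm.shift) → Cl (.ex A :: Γ) Δ
  | exR {Γ Δ A} (t : Tm) : Cl Γ (A.inst t :: Δ) → Cl Γ (.ex A :: Δ)

/-- Constructive (intuitionistic) single-conclusion sequent calculus:
the restriction of the classical calculus to sequents with at most one
conclusion, with the adapted ⇒-left rule. -/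
inductive Intu : List Fm → Option Fm → Prop where
  | ax (A : Fm) : Intu [A] (some A)
  | perm {Γ Γ' Δ} : Γ.Perm Γ' → Intu Γ Δ → Intu Γ' Δ
  | contrL {Γ Δ A} : Intu (A :: A :: Γ) Δ → Intu (A :: Γ) Δ
  | weakL {Γ Δ A} : Intu Γ Δ → Intu (A :: Γ) Δ
  | weakR {Γ A} : Intu Γ none → Intu Γ (some A)
  | topR {Γ} : Intu Γ (some .top)
  | botL {Γ Δ} : Intu (.bot :: Γ) Δ
  | negL {Γ A} : Intu Γ (some A) → Intu (.neg A :: Γ) none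
  | negR {Γ A} : Intu (A :: Γ) none → Intu Γ (some (.neg A))
  | andL {Γ Δ A B} : Intu (A :: B :: Γ) Δ → Intu (.and A B :: Γ) Δ
  | andR {Γ A B} : Intu Γ (some A) → Intu Γ (some B) → Intu Γ (some (.and A B))
  | orL {Γ Δ A B} : Intu (A :: Γ) Δ → Intu (B :: Γ) Δ → Intu (.or A B :: Γ) Δ
  | orR1 {Γ A B} : Intu Γ (some A) → Intu Γ (some (.or A B))
  | orR2 {Γ A B} : Intu Γ (some B) → Intu Γ (some (.or A B))
  | impL {Γ Δ A B} : Intu Γ (some A) → Intu (B :: Γ) Δ → Intu (.imp A B :: Γ) Δ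
  | impR {Γ A B} : Intu (A :: Γ) (some B) → Intu Γ (some (.imp A B))
  | allL {Γ Δ A} (t : Tm) : Intu (A.inst t :: Γ) Δ → Intu (.all A :: Γ) Δ
  | allR {Γ A} : Intu (Γ.map Fm.shift) (some A) → Intu Γ (some (.all A))
  | exL {Γ Δ A} : Intu (A :: Γ.map Fm.shift) (Δ.map Fm.shift) → Intu (.ex A :: Γ) Δ
  | exR {Γ A} (t : Tm) : Intu Γ (some (A.inst t)) → Intu Γ (some (.ex A))

/-- Dowek's translation ‖·‖: double negations both before and after each
connective and quantifier, atoms unchanged. -/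
def Fm.bar : Fm → Fm
  | .atom p l => .atom p l
  | .top => Fm.dn .top
  | .bot => Fm.dn .bot
  | .neg A => Fm.dn (Fm.dn (.neg A.bar))
  | .and A B => Fm.dn (.and (Fm.dn A.bar) (Fm.dn B.bar))
  | .or A B => Fm.dn (.or (Fm.dn A.bar) (Fm.dn B.bar))
  | .imp A B => Fm.dn (.imp (Fm.dn A.bar) (Fm.dn B.bar))
  | .all A => Fm.dn (.all (Fm.dn A.bar))
  | .ex A => Fm.dn (.ex (Fm.dn A.bar))

/-- The light translation |·|: like ‖·‖ but the outermost double negation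
is removed. -/
def Fm.light : Fm → Fm
  | .atom p l => .atom p l
  | .top => .top
  | .bot => .bot
  | .neg A => .neg (Fm.dn A.bar)
  | .and A B => .and (Fm.dn A.bar) (Fm.dn B.bar)
  | .or A B => .or (Fm.dn A.bar) (Fm.dn B.bar)
  | .imp A B => .imp (Fm.dn A.bar) (Fm.dn B.bar)
  | .all A => .all (Fm.dn A.bar)
  | .ex A => .ex (Fm.dn A.bar)

/-- A formula is atomic if it is of the form `atom p l`. -/
def Fm.isAtom : Fm → Prop
  | .atom _ _ => True
  | _ => False


/-- Classical negation `¬ᶜA = ¬¬¬¬¬A`. -/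
def Fm.negc (A : Fm) : Fm := Fm.dn (Fm.dn (.neg A))

/-- Classical disjunction `A ∨ᶜ B = ¬¬((¬¬A) ∨ (¬¬B))`. -/
def Fm.orc (A B : Fm) : Fm := Fm.dn (.or (Fm.dn A) (Fm.dn B))

/-- Classical implication `A ⇒ᶜ B = ¬¬((¬¬A) ⇒ (¬¬B))`. -/
def Fm.impc (A B : Fm) : Fm := Fm.dn (.imp (Fm.dn A) (Fm.dn B))

/-- Classical universal quantifier `∀ᶜx A = ¬¬∀x ¬¬A`. -/
def Fm.allc (A : Fm) : Fm := Fm.dn (.all (Fm.dn A))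

/-- `F(t)`, with `F` the predicate symbol `0`. -/
def F (t : Tm) : Fm := .atom 0 [t]

/-- `H = ∀x ∀y (F(x) ⇒ F(y) ⇒ F(x ∪ y))`. -/
def H : Fm :=
  .all (.all (.imp (F (.var 1)) (.imp (F (.var 0)) (F (.cup (.var 1) (.var 0))))))

/-! The classical connectives only add double negations, so after introducing them the goal
is to refute `¬(¬¬¬ᶜF(a) ∨ ¬¬¬ᶜF(b))` from `H` and `¬F(a ∪ b)`. Under this hypothesis,
`F(a)` refutes `F(b)` (by `H`, both would give `F(a ∪ b)`), which yields the right disjunct;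
hence `¬F(a)`, which yields the left disjunct.

The calculus has no cut, so derivations are built goal-directed, with left rules applied to a
hypothesis anywhere in the context and kept there; contraction and exchange make this
admissible. -/

theorem Tm.subst_rename (f : Nat → Nat) (σ : Nat → Tm) (s : Tm) :
    (s.rename f).subst σ = s.subst (σ ∘ f) := by
  induction s with
  | var n => rfl
  | cup s t ihs iht => simp only [Tm.rename, Tm.subst, ihs, iht]

theorem Tm.subst_var (s : Tm) : s.subst .var = s := by
  induction s with
  | var n => rfl
  | cup s t ihs iht => simp only [Tm.subst, ihs, iht]

theorem Tm.subst_rename_succ (t s : Tm) :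
    (s.rename Nat.succ).subst (fun n => match n with | 0 => t | n + 1 => .var n) = s := by
  rw [Tm.subst_rename]
  exact Tm.subst_var s

namespace Intu

variable {Γ : List Fm} {Δ : Option Fm} {A : Fm}

theorem weakL_append (Γ' : List Fm) (h : Intu Γ Δ) : Intu (Γ' ++ Γ) Δ := by
  induction Γ' with
  | nil => exact h
  | cons C Γ' ih => exact .weakL ih

theorem of_mem (h : A ∈ Γ) : Intu Γ (some A) :=
  .perm ((List.perm_append_singleton A _).trans (List.perm_cons_erase h).symm)
    (weakL_append (Γ.erase A) (.ax A))

theorem of_cons_of_mem (hA : A ∈ Γ) (h : Intu (A :: Γ) Δ) : Intu Γ Δ :=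
  have hΓ := List.perm_cons_erase hA
  .perm hΓ.symm (.contrL (.perm (hΓ.cons A) h))

theorem negL_of_mem (hA : Fm.neg A ∈ Γ) (h : Intu Γ (some A)) : Intu Γ none :=
  of_cons_of_mem hA (.negL h)

theorem dnL_of_mem (hA : Fm.dn A ∈ Γ) (h : Intu (A :: Γ) none) : Intu Γ none :=
  negL_of_mem hA (.negR h)

theorem allL_of_mem (hA : Fm.all A ∈ Γ) (t : Tm) (h : Intu (A.inst t :: Γ) Δ) : Intu Γ Δ :=
  of_cons_of_mem hA (.allL t h)

theorem dn_intro (h : Intu Γ (some A)) : Intu Γ (some (Fm.dn A)) :=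
  .negR (.negL h)

theorem negc_intro (h : Intu (A :: Γ) none) : Intu Γ (some (Fm.negc A)) :=
  dn_intro (dn_intro (.negR h))

end Intu

theorem H_shift : H.shift = H := rfl

theorem Fm.subst_F (σ : Nat → Tm) (u : Tm) : (F u).subst σ = F (u.subst σ) := rfl

theorem Intu.F_cup_of_H {Γ : List Fm} {s t : Tm} (hH : H ∈ Γ) (hs : F s ∈ Γ) (ht : F t ∈ Γ) :
    Intu Γ (some (F (.cup s t))) := by
  refine allL_of_mem hH s (.allL t ?_)
  simp only [Fm.inst, Fm.subst, Fm.subst_F, Tm.subst, liftS, Tm.subst_rename_succ]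
  exact .impL (of_mem (by simp [hs])) (.impL (of_mem (by simp [ht])) (of_mem (by simp)))

theorem Intu.orc_negc_of_neg_cup {Γ : List Fm} {s t : Tm} (hH : H ∈ Γ)
    (hst : Fm.neg (F (.cup s t)) ∈ Γ) :
    Intu Γ (some (Fm.orc (Fm.negc (F s)) (Fm.negc (F t)))) := by
  refine .negR (negL_of_mem List.mem_cons_self (.orR1 (dn_intro (negc_intro ?_))))
  refine negL_of_mem (List.mem_cons_of_mem _ List.mem_cons_self)
    (.orR2 (dn_intro (negc_intro ?_)))
  exact negL_of_mem (by simp [hst])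
    (F_cup_of_H (s := s) (t := t) (by simp [hH]) (by simp) (by simp))

theorem stmt13 :
    Intu [] (some (.imp H
      (Fm.allc (Fm.allc (Fm.impc (Fm.negc (F (.cup (.var 1) (.var 0))))
        (Fm.orc (Fm.negc (F (.var 1))) (Fm.negc (F (.var 0))))))))) := by
  refine .impR (.dn_intro (.allR ?_))
  rw [List.map_singleton, H_shift]
  refine .dn_intro (.dn_intro (.allR ?_))
  rw [List.map_singleton, H_shift]
  refine .dn_intro (.dn_intro (.impR (.negR ?_)))
  refine .dnL_of_mem (List.mem_cons_of_mem _ List.mem_cons_self) ?_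
  refine .dnL_of_mem List.mem_cons_self (.dnL_of_mem List.mem_cons_self ?_)
  exact .negL_of_mem (by simp) (.orc_negc_of_neg_cup (by simp) List.mem_cons_self)
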